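/- Let F = E - ιB be the electromagnetic bivector, F = Eᵢ 𝐛𝐛ⁱ - Bⁱ ι 𝐛𝐛ᵢ, and let j = ej + ι mj with ej = ej_μ b^μ, mj = mj_μ b^μ. Then the single Clifford equation ∂F = -4π j, where ∂ = b^μ ∂_μ, is equivalent to the eight real Maxwell equations with magnetic sources: div E = 4π eρ, curl B - ∂ₜE = 4π e𝔧, div B = 4π mρ, -curl E - ∂ₜB = 4π m𝔧 (in the orthonormal Minkowski basis, with eρ = ej⁰, etc.), obtained by separating the vector and imaginary-vector (trivector) parts. -/

import Mathlib

open CliffordAlgebra Real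

/-- The Minkowski quadratic form of signature (-,+,+,+) on `ℝ⁴`. -/
noncomputable def Qmink : QuadraticForm ℝ (Fin 4 → ℝ) :=
  QuadraticMap.weightedSumSquares ℝ (fun i : Fin 4 => if i = 0 then (-1 : ℝ) else 1)

/-- The orthonormal basis vectors `b_μ`. -/
noncomputable def bl (μ : Fin 4) : CliffordAlgebra Qmink := ι Qmink (Pi.single μ 1)

/-- The dual basis vectors `b^μ` (`b⁰ = -b₀`, `bⁱ = bᵢ`). -/
noncomputable def bup (μ : Fin 4) : CliffordAlgebra Qmink :=
  if μ = 0 then -bl 0 else bl μ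

/-- The unit pseudoscalar `ι = b⁰ b¹ b² b³`. -/
noncomputable def pseu : CliffordAlgebra Qmink := bup 0 * bup 1 * bup 2 * bup 3

/-- The basis bivectors `𝐛𝐛ⁱ = bⁱ ∧ b⁰`. -/
noncomputable def BBup (i : Fin 4) : CliffordAlgebra Qmink :=
  (1 / 2 : ℝ) • (bup i * bup 0 - bup 0 * bup i)

/-- The basis bivectors `𝐛𝐛_i = b₀ ∧ b_i`. -/
noncomputable def BBlow (i : Fin 4) : CliffordAlgebra Qmink :=
  (1 / 2 : ℝ) • (bl 0 * bl i - bl i * bl 0)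

/-- Partial derivative `∂_μ f` of a real-valued function on space-time. -/
noncomputable def pd (μ : Fin 4) (f : (Fin 4 → ℝ) → ℝ) (x : Fin 4 → ℝ) : ℝ :=
  fderiv ℝ f x (Pi.single μ 1)

/-- The three-dimensional alternating symbol with `ε 0 1 2 = 1`. -/
noncomputable def eps3 (i j k : Fin 3) : ℝ :=
  ((((j : ℤ) - (i : ℤ)) * ((k : ℤ) - (i : ℤ)) * ((k : ℤ) - (j : ℤ))) / 2 : ℤ)

lemma Qmink_single (μ : Fin 4) : Qmink (Pi.single μ 1) = if μ = 0 then -1 else 1 := by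
  simp [Qmink, QuadraticMap.weightedSumSquares_apply, Pi.single_apply]

lemma bl_sq (μ : Fin 4) : bl μ * bl μ = algebraMap ℝ _ (if μ = 0 then -1 else 1) := by
  rw [bl, ι_sq_scalar, Qmink_single]

lemma bl_swap {μ ν : Fin 4} (h : μ ≠ ν) : bl μ * bl ν = -(bl ν * bl μ) := by
  refine ι_mul_ι_comm_of_isOrtho ?_
  fin_cases μ <;> fin_cases ν <;>
    first
    | exact absurd rfl h
    | norm_num [QuadraticMap.IsOrtho, Qmink, QuadraticMap.weightedSumSquares_apply,
        Fin.sum_univ_four, Pi.single_apply, Fin.ext_iff, show ((3:Fin 4):ℕ)=3 from rfl,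
        show ((2:Fin 4):ℕ)=2 from rfl, show ((1:Fin 4):ℕ)=1 from rfl,
        show ((0:Fin 4):ℕ)=0 from rfl, -Fin.val_eq_zero_iff]

-- squares
lemma bl00 : bl 0 * bl 0 = -1 := by rw [bl_sq]; simp
lemma bl11 : bl 1 * bl 1 = 1 := by rw [bl_sq, if_neg (by decide)]; simp
lemma bl22 : bl 2 * bl 2 = 1 := by rw [bl_sq, if_neg (by decide)]; simp
lemma bl33 : bl 3 * bl 3 = 1 := by rw [bl_sq, if_neg (by decide)]; simp
lemma bl00l (x : CliffordAlgebra Qmink) : bl 0 * (bl 0 * x) = -x := by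
  rw [← mul_assoc, bl00]; simp
lemma bl11l (x : CliffordAlgebra Qmink) : bl 1 * (bl 1 * x) = x := by
  rw [← mul_assoc, bl11, one_mul]
lemma bl22l (x : CliffordAlgebra Qmink) : bl 2 * (bl 2 * x) = x := by
  rw [← mul_assoc, bl22, one_mul]
lemma bl33l (x : CliffordAlgebra Qmink) : bl 3 * (bl 3 * x) = x := by
  rw [← mul_assoc, bl33, one_mul]

-- swaps (decreasing index to the right)
lemma sw10 : bl 1 * bl 0 = -(bl 0 * bl 1) := bl_swap (by decide)
lemma sw20 : bl 2 * bl 0 = -(bl 0 * bl 2) := bl_swap (by decide)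
lemma sw30 : bl 3 * bl 0 = -(bl 0 * bl 3) := bl_swap (by decide)
lemma sw21 : bl 2 * bl 1 = -(bl 1 * bl 2) := bl_swap (by decide)
lemma sw31 : bl 3 * bl 1 = -(bl 1 * bl 3) := bl_swap (by decide)
lemma sw32 : bl 3 * bl 2 = -(bl 2 * bl 3) := bl_swap (by decide)
lemma sw10l (x : CliffordAlgebra Qmink) : bl 1 * (bl 0 * x) = -(bl 0 * (bl 1 * x)) := by
  rw [← mul_assoc, sw10, neg_mul, mul_assoc]
lemma sw20l (x : CliffordAlgebra Qmink) : bl 2 * (bl 0 * x) = -(bl 0 * (bl 2 * x)) := by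
  rw [← mul_assoc, sw20, neg_mul, mul_assoc]
lemma sw30l (x : CliffordAlgebra Qmink) : bl 3 * (bl 0 * x) = -(bl 0 * (bl 3 * x)) := by
  rw [← mul_assoc, sw30, neg_mul, mul_assoc]
lemma sw21l (x : CliffordAlgebra Qmink) : bl 2 * (bl 1 * x) = -(bl 1 * (bl 2 * x)) := by
  rw [← mul_assoc, sw21, neg_mul, mul_assoc]
lemma sw31l (x : CliffordAlgebra Qmink) : bl 3 * (bl 1 * x) = -(bl 1 * (bl 3 * x)) := by
  rw [← mul_assoc, sw31, neg_mul, mul_assoc]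
lemma sw32l (x : CliffordAlgebra Qmink) : bl 3 * (bl 2 * x) = -(bl 2 * (bl 3 * x)) := by
  rw [← mul_assoc, sw32, neg_mul, mul_assoc]

lemma bup0 : bup 0 = -bl 0 := by rw [bup, if_pos rfl]
lemma bup1 : bup 1 = bl 1 := by rw [bup, if_neg (by decide)]
lemma bup2 : bup 2 = bl 2 := by rw [bup, if_neg (by decide)]
lemma bup3 : bup 3 = bl 3 := by rw [bup, if_neg (by decide)]

lemma BBup1 : BBup 1 = bl 0 * bl 1 := by
  rw [BBup, bup0, bup1]; simp [mul_neg, neg_mul, sw10]; module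
lemma BBup2 : BBup 2 = bl 0 * bl 2 := by
  rw [BBup, bup0, bup2]; simp [mul_neg, neg_mul, sw20]; module
lemma BBup3 : BBup 3 = bl 0 * bl 3 := by
  rw [BBup, bup0, bup3]; simp [mul_neg, neg_mul, sw30]; module
lemma BBlow1 : BBlow 1 = bl 0 * bl 1 := by
  rw [BBlow]; simp [sw10]; module
lemma BBlow2 : BBlow 2 = bl 0 * bl 2 := by
  rw [BBlow]; simp [sw20]; module
lemma BBlow3 : BBlow 3 = bl 0 * bl 3 := by
  rw [BBlow]; simp [sw30]; module

lemma pseu_eq : pseu = -(bl 0 * (bl 1 * (bl 2 * bl 3))) := by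
  rw [pseu, bup0, bup1, bup2, bup3]; simp [mul_assoc]

lemma succ0 : (0:Fin 3).succ = (1:Fin 4) := rfl
lemma succ1 : (1:Fin 3).succ = (2:Fin 4) := rfl
lemma succ2 : (2:Fin 3).succ = (3:Fin 4) := rfl

lemma expandL (cE cB : Fin 4 → Fin 3 → ℝ) :
    ((∑ μ : Fin 4, ∑ i : Fin 3, cE μ i • (bup μ * BBup i.succ)) -
      ∑ μ : Fin 4, ∑ i : Fin 3, cB μ i • (bup μ * (pseu * BBlow i.succ)))
    = (-(cE 1 0 + cE 2 1 + cE 3 2)) • bl 0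
      + (cE 0 0 + cB 3 1 - cB 2 2) • bl 1
      + (cE 0 1 - cB 3 0 + cB 1 2) • bl 2
      + (cE 0 2 + cB 2 0 - cB 1 1) • bl 3
      + (cE 2 0 - cE 1 1 - cB 0 2) • (bl 0 * (bl 1 * bl 2))
      + (cE 3 0 - cE 1 2 + cB 0 1) • (bl 0 * (bl 1 * bl 3))
      + (cE 3 1 - cE 2 2 - cB 0 0) • (bl 0 * (bl 2 * bl 3))
      + (cB 1 0 + cB 2 1 + cB 3 2) • (bl 1 * (bl 2 * bl 3)) := by
  simp only [Fin.sum_univ_four, Fin.sum_univ_three, succ0, succ1, succ2,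
    bup0, bup1, bup2, bup3, BBup1, BBup2, BBup3, BBlow1, BBlow2, BBlow3, pseu_eq,
    mul_assoc, neg_mul, mul_neg, neg_neg, smul_neg,
    bl00l, bl11l, bl22l, bl33l, sw10l, sw20l, sw30l, sw21l, sw31l, sw32l,
    bl00, bl11, bl22, bl33, sw10, sw20, sw30, sw21, sw31, sw32,
    mul_one, one_mul]
  module

lemma expandR (v w : Fin 4 → ℝ) :
    ((-(4 * π) : ℝ) • ((∑ μ : Fin 4, v μ • bl μ) + pseu * ∑ μ : Fin 4, w μ • bl μ))
    = (-(4*π) * v 0) • bl 0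
      + (-(4*π) * v 1) • bl 1
      + (-(4*π) * v 2) • bl 2
      + (-(4*π) * v 3) • bl 3
      + (4*π * w 3) • (bl 0 * (bl 1 * bl 2))
      + (-(4*π) * w 2) • (bl 0 * (bl 1 * bl 3))
      + (4*π * w 1) • (bl 0 * (bl 2 * bl 3))
      + (4*π * w 0) • (bl 1 * (bl 2 * bl 3)) := by
  simp only [Fin.sum_univ_four, pseu_eq, mul_add, mul_smul_comm,
    mul_assoc, neg_mul, mul_neg, neg_neg, smul_neg,
    bl00l, bl11l, bl22l, bl33l, sw10l, sw20l, sw30l, sw21l, sw31l, sw32l,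
    bl00, bl11, bl22, bl33, sw10, sw20, sw30, sw21, sw31, sw32,
    mul_one, one_mul]
  module

def g0 : Matrix (Fin 4) (Fin 4) ℝ := !![0,1,0,0; -1,0,0,0; 0,0,0,-1; 0,0,1,0]
def g1 : Matrix (Fin 4) (Fin 4) ℝ := !![0,0,1,0; 0,0,0,1; 1,0,0,0; 0,1,0,0]
def g2 : Matrix (Fin 4) (Fin 4) ℝ := !![0,1,0,0; 1,0,0,0; 0,0,0,-1; 0,0,-1,0]
def g3 : Matrix (Fin 4) (Fin 4) ℝ := !![1,0,0,0; 0,-1,0,0; 0,0,-1,0; 0,0,0,1]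

noncomputable def gam : Fin 4 → Matrix (Fin 4) (Fin 4) ℝ := ![g0, g1, g2, g3]

noncomputable def fγ : (Fin 4 → ℝ) →ₗ[ℝ] Matrix (Fin 4) (Fin 4) ℝ :=
  ∑ μ : Fin 4, LinearMap.smulRight (LinearMap.proj μ) (gam μ)

lemma fγ_apply (v : Fin 4 → ℝ) : fγ v = ∑ μ : Fin 4, v μ • gam μ := by
  simp [fγ, LinearMap.sum_apply]

lemma fγ_sq (v : Fin 4 → ℝ) :
    fγ v * fγ v = algebraMap ℝ (Matrix (Fin 4) (Fin 4) ℝ) (Qmink v) := by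
  rw [fγ_apply]
  ext i j
  fin_cases i <;> fin_cases j <;>
    simp [Fin.sum_univ_four, gam, g0, g1, g2, g3, Matrix.mul_apply,
      Matrix.algebraMap_matrix_apply, Qmink, QuadraticMap.weightedSumSquares_apply,
      Fin.ext_iff, show ((3:Fin 4):ℕ)=3 from rfl, show ((2:Fin 4):ℕ)=2 from rfl,
      show ((1:Fin 4):ℕ)=1 from rfl, show ((0:Fin 4):ℕ)=0 from rfl, -Fin.val_eq_zero_iff] <;>
    ring

noncomputable def φm : CliffordAlgebra Qmink →ₐ[ℝ] Matrix (Fin 4) (Fin 4) ℝ :=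
  CliffordAlgebra.lift Qmink ⟨fγ, fγ_sq⟩

lemma φm_bl (μ : Fin 4) : φm (bl μ) = gam μ := by
  rw [φm, bl, CliffordAlgebra.lift_ι_apply, fγ_apply]
  fin_cases μ <;>
    simp [Fin.sum_univ_four, Pi.single_apply, Fin.ext_iff,
      show ((3:Fin 4):ℕ)=3 from rfl, show ((2:Fin 4):ℕ)=2 from rfl,
      show ((1:Fin 4):ℕ)=1 from rfl, show ((0:Fin 4):ℕ)=0 from rfl, -Fin.val_eq_zero_iff]

lemma gam0 : gam 0 = g0 := rfl
lemma gam1 : gam 1 = g1 := rfl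
lemma gam2 : gam 2 = g2 := rfl
lemma gam3 : gam 3 = g3 := rfl

lemma t012m : g0 * (g1 * g2) = !![0,0,-1,0; 0,0,0,1; -1,0,0,0; 0,1,0,0] := by
  ext i j
  fin_cases i <;> fin_cases j <;>
    simp [g0, g1, g2, Matrix.mul_apply, Fin.sum_univ_four, Matrix.vecHead, Matrix.vecTail]
lemma t013m : g0 * (g1 * g3) = !![0,0,0,1; 0,0,1,0; 0,1,0,0; 1,0,0,0] := by
  ext i j
  fin_cases i <;> fin_cases j <;>
    simp [g0, g1, g3, Matrix.mul_apply, Fin.sum_univ_four, Matrix.vecHead, Matrix.vecTail]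
lemma t023m : g0 * (g2 * g3) = !![1,0,0,0; 0,1,0,0; 0,0,-1,0; 0,0,0,-1] := by
  ext i j
  fin_cases i <;> fin_cases j <;>
    simp [g0, g2, g3, Matrix.mul_apply, Fin.sum_univ_four, Matrix.vecHead, Matrix.vecTail]
lemma t123m : g1 * (g2 * g3) = !![0,0,0,-1; 0,0,1,0; 0,-1,0,0; 1,0,0,0] := by
  ext i j
  fin_cases i <;> fin_cases j <;>
    simp [g1, g2, g3, Matrix.mul_apply, Fin.sum_univ_four, Matrix.vecHead, Matrix.vecTail]

lemma indep_iff (a₀ a₁ a₂ a₃ a₄ a₅ a₆ a₇ b₀ b₁ b₂ b₃ b₄ b₅ b₆ b₇ : ℝ) :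
    a₀ • bl 0 + a₁ • bl 1 + a₂ • bl 2 + a₃ • bl 3
      + a₄ • (bl 0 * (bl 1 * bl 2)) + a₅ • (bl 0 * (bl 1 * bl 3))
      + a₆ • (bl 0 * (bl 2 * bl 3)) + a₇ • (bl 1 * (bl 2 * bl 3))
    = b₀ • bl 0 + b₁ • bl 1 + b₂ • bl 2 + b₃ • bl 3
      + b₄ • (bl 0 * (bl 1 * bl 2)) + b₅ • (bl 0 * (bl 1 * bl 3))
      + b₆ • (bl 0 * (bl 2 * bl 3)) + b₇ • (bl 1 * (bl 2 * bl 3))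
    ↔ (a₀ = b₀ ∧ a₁ = b₁ ∧ a₂ = b₂ ∧ a₃ = b₃ ∧ a₄ = b₄ ∧ a₅ = b₅ ∧ a₆ = b₆ ∧ a₇ = b₇) := by
  constructor
  · intro h
    have h' := congrArg φm h
    simp only [map_add, map_smul, map_mul, φm_bl, gam0, gam1, gam2, gam3] at h'
    rw [t012m, t013m, t023m, t123m] at h'
    have e00 := congrFun (congrFun h' 0) 0
    have e01 := congrFun (congrFun h' 0) 1
    have e02 := congrFun (congrFun h' 0) 2
    have e03 := congrFun (congrFun h' 0) 3
    have e10 := congrFun (congrFun h' 1) 0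
    have e11 := congrFun (congrFun h' 1) 1
    have e12 := congrFun (congrFun h' 1) 2
    have e13 := congrFun (congrFun h' 1) 3
    simp only [Matrix.add_apply, Matrix.smul_apply, g0, g1, g2, g3, Matrix.of_apply,
      Matrix.cons_val', Matrix.cons_val_zero, Matrix.cons_val_one, Matrix.head_cons,
      Matrix.empty_val', Matrix.cons_val_fin_one, Matrix.head_fin_const,
      Matrix.cons_val_two, Matrix.cons_val_three, Matrix.tail_cons, Matrix.vecHead, Matrix.vecTail,
      Function.comp_apply, Matrix.cons_val_succ,
      smul_eq_mul, mul_zero, mul_one, mul_neg, add_zero, zero_add, neg_zero] at e00 e01 e02 e03 e10 e11 e12 e13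
    refine ⟨by linarith, by linarith, by linarith, by linarith,
      by linarith, by linarith, by linarith, by linarith⟩
  · rintro ⟨rfl, rfl, rfl, rfl, rfl, rfl, rfl, rfl⟩
    rfl

lemma eps3_000 : eps3 0 0 0 = 0 := by norm_num [eps3]
lemma eps3_001 : eps3 0 0 1 = 0 := by norm_num [eps3]
lemma eps3_002 : eps3 0 0 2 = 0 := by norm_num [eps3]
lemma eps3_010 : eps3 0 1 0 = 0 := by norm_num [eps3]
lemma eps3_011 : eps3 0 1 1 = 0 := by norm_num [eps3]
lemma eps3_012 : eps3 0 1 2 = 1 := by norm_num [eps3]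
lemma eps3_020 : eps3 0 2 0 = 0 := by norm_num [eps3]
lemma eps3_021 : eps3 0 2 1 = -1 := by norm_num [eps3]
lemma eps3_022 : eps3 0 2 2 = 0 := by norm_num [eps3]
lemma eps3_100 : eps3 1 0 0 = 0 := by norm_num [eps3]
lemma eps3_101 : eps3 1 0 1 = 0 := by norm_num [eps3]
lemma eps3_102 : eps3 1 0 2 = -1 := by norm_num [eps3]
lemma eps3_110 : eps3 1 1 0 = 0 := by norm_num [eps3]
lemma eps3_111 : eps3 1 1 1 = 0 := by norm_num [eps3]
lemma eps3_112 : eps3 1 1 2 = 0 := by norm_num [eps3]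
lemma eps3_120 : eps3 1 2 0 = 1 := by norm_num [eps3]
lemma eps3_121 : eps3 1 2 1 = 0 := by norm_num [eps3]
lemma eps3_122 : eps3 1 2 2 = 0 := by norm_num [eps3]
lemma eps3_200 : eps3 2 0 0 = 0 := by norm_num [eps3]
lemma eps3_201 : eps3 2 0 1 = 1 := by norm_num [eps3]
lemma eps3_202 : eps3 2 0 2 = 0 := by norm_num [eps3]
lemma eps3_210 : eps3 2 1 0 = -1 := by norm_num [eps3]
lemma eps3_211 : eps3 2 1 1 = 0 := by norm_num [eps3]
lemma eps3_212 : eps3 2 1 2 = 0 := by norm_num [eps3]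
lemma eps3_220 : eps3 2 2 0 = 0 := by norm_num [eps3]
lemma eps3_221 : eps3 2 2 1 = 0 := by norm_num [eps3]
lemma eps3_222 : eps3 2 2 2 = 0 := by norm_num [eps3]

lemma keylem (cE cB : Fin 4 → Fin 3 → ℝ) (v w : Fin 4 → ℝ) :
    ((∑ μ : Fin 4, ∑ i : Fin 3, cE μ i • (bup μ * BBup i.succ)) -
        ∑ μ : Fin 4, ∑ i : Fin 3, cB μ i • (bup μ * (pseu * BBlow i.succ))
      = (-(4 * π) : ℝ) • ((∑ μ : Fin 4, v μ • bl μ) + pseu * ∑ μ : Fin 4, w μ • bl μ))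
    ↔ (-(cE 1 0 + cE 2 1 + cE 3 2) = -(4*π) * v 0
      ∧ cE 0 0 + cB 3 1 - cB 2 2 = -(4*π) * v 1
      ∧ cE 0 1 - cB 3 0 + cB 1 2 = -(4*π) * v 2
      ∧ cE 0 2 + cB 2 0 - cB 1 1 = -(4*π) * v 3
      ∧ cE 2 0 - cE 1 1 - cB 0 2 = 4*π * w 3
      ∧ cE 3 0 - cE 1 2 + cB 0 1 = -(4*π) * w 2
      ∧ cE 3 1 - cE 2 2 - cB 0 0 = 4*π * w 1
      ∧ cB 1 0 + cB 2 1 + cB 3 2 = 4*π * w 0) := by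
  rw [expandL, expandR, indep_iff]

lemma fin3_forall (P : Fin 3 → Prop) : (∀ i, P i) ↔ P 0 ∧ P 1 ∧ P 2 :=
  ⟨fun h => ⟨h 0, h 1, h 2⟩, fun ⟨h0, h1, h2⟩ i => by fin_cases i <;> assumption⟩

/-- For the electromagnetic bivector `F = Eᵢ 𝐛𝐛ⁱ - Bⁱ ι 𝐛𝐛ᵢ` and the dyonic current
`j = ej_μ b^μ + ι mj_μ b^μ`, the single Clifford equation `∂F = -4π j` (with
`∂ = b^μ ∂_μ`) is equivalent to the eight real Maxwell equations with magnetic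
sources: `div E = 4π eρ`, `curl B - ∂ₜE = 4π e𝔧`, `div B = 4π mρ`,
`-curl E - ∂ₜB = 4π m𝔧`, obtained by separating the vector and
imaginary-vector (trivector) parts. -/
theorem stmt11 (E B : (Fin 4 → ℝ) → Fin 3 → ℝ) (ej mj : (Fin 4 → ℝ) → Fin 4 → ℝ)
    (hE : ∀ i, Differentiable ℝ (fun x => E x i))
    (hB : ∀ i, Differentiable ℝ (fun x => B x i)) :
    (∀ x : Fin 4 → ℝ,
      ((∑ μ : Fin 4, ∑ i : Fin 3,
          pd μ (fun y => E y i) x • (bup μ * BBup i.succ)) -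
        ∑ μ : Fin 4, ∑ i : Fin 3,
          pd μ (fun y => B y i) x • (bup μ * (pseu * BBlow i.succ)))
        = (-(4 * π) : ℝ) •
            ((∑ μ : Fin 4, ej x μ • bl μ) + pseu * ∑ μ : Fin 4, mj x μ • bl μ))
    ↔
    (∀ x : Fin 4 → ℝ,
      (∑ i : Fin 3, pd i.succ (fun y => E y i) x = 4 * π * ej x 0) ∧
      (∀ i : Fin 3,
        (∑ j : Fin 3, ∑ k : Fin 3, eps3 i j k * pd j.succ (fun y => B y k) x) -
            pd 0 (fun y => E y i) x = 4 * π * ej x i.succ) ∧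
      (∑ i : Fin 3, pd i.succ (fun y => B y i) x = 4 * π * mj x 0) ∧
      (∀ i : Fin 3,
        -(∑ j : Fin 3, ∑ k : Fin 3, eps3 i j k * pd j.succ (fun y => E y k) x) -
            pd 0 (fun y => B y i) x = 4 * π * mj x i.succ)) := by
  refine forall_congr' fun x => Iff.trans
    (keylem (fun μ i => pd μ (fun y => E y i) x) (fun μ i => pd μ (fun y => B y i) x)
      (ej x) (mj x)) ?_
  rw [fin3_forall, fin3_forall]
  simp only [Fin.sum_univ_three, succ0, succ1, succ2, eps3_000, eps3_001, eps3_002, eps3_010, eps3_011, eps3_012, eps3_020, eps3_021, eps3_022, eps3_100, eps3_101, eps3_102, eps3_110, eps3_111, eps3_112, eps3_120, eps3_121, eps3_122, eps3_200, eps3_201, eps3_202, eps3_210, eps3_211, eps3_212, eps3_220, eps3_221, eps3_222,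
    zero_mul, one_mul, neg_one_mul, neg_mul, add_zero, zero_add, zero_sub, sub_zero, neg_neg]
  constructor
  · rintro ⟨h0, h1, h2, h3, h4, h5, h6, h7⟩
    refine ⟨by linarith, ⟨by linarith, by linarith, by linarith⟩, by linarith,
      by linarith, by linarith, by linarith⟩
  · rintro ⟨h0, ⟨h1, h2, h3⟩, h4, h5, h6, h7⟩
    refine ⟨by linarith, by linarith, by linarith, by linarith,
      by linarith, by linarith, by linarith, by linarith⟩
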